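/- arXiv:2101.04491 — 3 statements merged into one kernel-verified Lean document; each statement's English description precedes it below -/
import Mathlib

section
/- The Laplace distribution is an exponential scale mixture of normal distributions: for every x ∈ ℝ and every λ > 0, ∫_0^∞ (2πs)^{−1/2} exp(−x²/(2s)) · (λ²/2) exp(−λ² s/2) ds = (λ/2) exp(−λ|x|). -/
/-!
Substituting `s = t²` and completing the square,
`x² / (2t²) + λ²t² / 2 = λ|x| + (λt - |x|/t)² / 2`, turns the mixture integral into
`λ² / √(2π) · e^{-λ|x|} · ∫₀^∞ e^{-(λt - |x|/t)²/2} dt`. The last integral is Gaussian by the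
Cauchy–Schlömilch transformation `∫₀^∞ g(at - b/t) dt = (2a)⁻¹ ∫ g` for even integrable `g`:
the map `t ↦ at - b/t` is a bijection `(0, ∞) → ℝ` with Jacobian `a + b/t²`, while the
involution `t ↦ b/(at)` shows that `(a - b/t²) g(at - b/t)` integrates to zero.
-/

open Real MeasureTheory Set

section CauchySchlomilch

lemma hasDerivAt_mul_sub_div (a b : ℝ) {x : ℝ} (hx : x ≠ 0) :
    HasDerivAt (fun x => a * x - b / x) (a + b / x ^ 2) x := by
  have h : HasDerivAt (fun y : ℝ => a * y - b * y⁻¹) (a * 1 - b * -(x ^ 2)⁻¹) x :=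
    ((hasDerivAt_id' x).const_mul a).sub ((hasDerivAt_inv hx).const_mul b)
  rw [show a + b / x ^ 2 = a * 1 - b * -(x ^ 2)⁻¹ by ring]
  simpa only [div_eq_mul_inv] using h

variable {a b : ℝ}

lemma strictMonoOn_mul_sub_div (ha : 0 < a) (hb : 0 ≤ b) :
    StrictMonoOn (fun x => a * x - b / x) (Ioi 0) := fun x hx y _ hxy => by
  have := div_le_div_of_nonneg_left hb hx hxy.le
  have := mul_lt_mul_of_pos_left hxy ha
  dsimp only
  linarith

lemma image_mul_sub_div_Ioi (ha : 0 < a) (hb : 0 < b) :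
    (fun x => a * x - b / x) '' Ioi 0 = univ := by
  refine eq_univ_of_forall fun u => ?_
  set D := √(u ^ 2 + 4 * a * b)
  have hD : D ^ 2 = u ^ 2 + 4 * a * b := sq_sqrt (by positivity)
  have hDu : 0 < u + D := by
    nlinarith [sqrt_nonneg (u ^ 2 + 4 * a * b), sq_abs u, abs_nonneg u, neg_abs_le u]
  -- the positive root of `a x² - u x - b`
  refine ⟨(u + D) / (2 * a), div_pos hDu (by positivity), ?_⟩
  field_simp
  linear_combination hD

lemma mul_sub_div_div_eq_neg (ha : a ≠ 0) (hb : b ≠ 0) {x : ℝ} (hx : x ≠ 0) :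
    a * (b / a / x) - b / (b / a / x) = -(a * x - b / x) := by
  field_simp
  ring

variable {g : ℝ → ℝ}

lemma integrableOn_deriv_mul_comp_mul_sub_div (ha : 0 < a) (hb : 0 < b) (hg : Integrable g) :
    IntegrableOn (fun x => (a + b / x ^ 2) * g (a * x - b / x)) (Ioi 0) := by
  have h := (integrableOn_image_iff_integrableOn_abs_deriv_smul measurableSet_Ioi
    (fun x hx => (hasDerivAt_mul_sub_div a b (ne_of_gt hx)).hasDerivWithinAt)
    (strictMonoOn_mul_sub_div ha hb.le).injOn g).1
    (by rwa [image_mul_sub_div_Ioi ha hb, integrableOn_univ])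
  refine h.congr_fun (fun x (hx : 0 < x) => ?_) measurableSet_Ioi
  dsimp only
  rw [smul_eq_mul, abs_of_pos (by positivity)]

lemma integrableOn_comp_mul_sub_div (ha : 0 < a) (hb : 0 < b) (hg : Integrable g) :
    IntegrableOn (fun x => g (a * x - b / x)) (Ioi 0) := by
  have hcont : ContinuousOn (fun x : ℝ => (a + b / x ^ 2)⁻¹) (Ioi 0) :=
    fun x (hx : 0 < x) => by fun_prop (disch := positivity)
  refine IntegrableOn.congr_fun
    ((integrableOn_deriv_mul_comp_mul_sub_div ha hb hg).bdd_mul (c := a⁻¹)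
      (hcont.aestronglyMeasurable measurableSet_Ioi) ?_)
    (fun x (hx : 0 < x) => ?_) measurableSet_Ioi
  · filter_upwards [ae_restrict_mem measurableSet_Ioi] with x (hx : 0 < x)
    rw [norm_inv, Real.norm_of_nonneg (by positivity)]
    exact inv_anti₀ ha (le_add_of_nonneg_right (by positivity))
  · rw [← mul_assoc, inv_mul_cancel₀ (by positivity), one_mul]

lemma integral_deriv_mul_comp_mul_sub_div (ha : 0 < a) (hb : 0 < b) :
    ∫ x in Ioi 0, (a + b / x ^ 2) * g (a * x - b / x) = ∫ y, g y := by
  have h := integral_image_eq_integral_abs_deriv_smul measurableSet_Ioi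
    (fun x hx => (hasDerivAt_mul_sub_div a b (ne_of_gt hx)).hasDerivWithinAt)
    (strictMonoOn_mul_sub_div ha hb.le).injOn g
  rw [image_mul_sub_div_Ioi ha hb, setIntegral_univ] at h
  rw [h]
  refine setIntegral_congr_fun measurableSet_Ioi fun x (hx : 0 < x) => ?_
  rw [smul_eq_mul, abs_of_pos (by positivity)]

lemma integral_sub_mul_comp_mul_sub_div (ha : 0 < a) (hb : 0 < b) (heven : Function.Even g) :
    ∫ x in Ioi 0, (a - b / x ^ 2) * g (a * x - b / x) = 0 := by
  set c := b / a
  have hc : 0 < c := div_pos hb ha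
  have hψ' : ∀ x ∈ Ioi (0 : ℝ), HasDerivWithinAt (fun x => c / x) (-(c / x ^ 2)) (Ioi 0) x :=
    fun x hx => by
      simpa [div_eq_mul_inv] using
        ((hasDerivAt_inv (ne_of_gt hx)).const_mul c).hasDerivWithinAt
  have hmaps : MapsTo (fun x => c / x) (Ioi 0) (Ioi 0) := fun x hx => div_pos hc hx
  have hψ : BijOn (fun x => c / x) (Ioi 0) (Ioi 0) :=
    InvOn.bijOn ⟨fun x _ => div_div_cancel₀ hc.ne', fun x _ => div_div_cancel₀ hc.ne'⟩ hmaps hmaps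
  suffices h : ∫ x in Ioi 0, (a - b / x ^ 2) * g (a * x - b / x) =
      -∫ x in Ioi 0, (a - b / x ^ 2) * g (a * x - b / x) by linarith
  conv_lhs => rw [← hψ.image_eq]
  rw [integral_image_eq_integral_abs_deriv_smul measurableSet_Ioi hψ' hψ.injOn, ← integral_neg]
  refine setIntegral_congr_fun measurableSet_Ioi fun x (hx : 0 < x) => ?_
  rw [smul_eq_mul, mul_sub_div_div_eq_neg ha.ne' hb.ne' hx.ne', heven, abs_neg,
    abs_of_pos (by positivity), ← mul_assoc, ← neg_mul]
  congr 1
  simp only [c]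
  field_simp
  ring

lemma integral_Ioi_eq_half_integral_of_even (heven : Function.Even g) :
    ∫ y in Ioi 0, g y = 2⁻¹ * ∫ y, g y := by
  have : ∀ y, g |y| = g y := fun y => by
    rcases abs_choice y with h | h <;> rw [h]
    exact heven y
  have h := integral_comp_abs (f := g)
  simp_rw [this] at h
  rw [h]
  ring

theorem integral_comp_mul_sub_div_Ioi (ha : 0 < a) (hb : 0 ≤ b) (hg : Integrable g)
    (heven : Function.Even g) :
    ∫ x in Ioi 0, g (a * x - b / x) = (2 * a)⁻¹ * ∫ y, g y := by
  rcases hb.eq_or_lt with rfl | hb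
  · simp only [zero_div, sub_zero]
    rw [integral_comp_mul_left_Ioi g 0 ha, mul_zero, integral_Ioi_eq_half_integral_of_even heven,
      smul_eq_mul]
    ring
  have hsplit : ∫ x in Ioi 0, (a - b / x ^ 2) * g (a * x - b / x) =
      2 * a * (∫ x in Ioi 0, g (a * x - b / x)) -
        ∫ x in Ioi 0, (a + b / x ^ 2) * g (a * x - b / x) := by
    rw [← integral_const_mul, ← integral_sub
      ((integrableOn_comp_mul_sub_div ha hb hg).const_mul _)
      (integrableOn_deriv_mul_comp_mul_sub_div ha hb hg)]
    congr with x
    ring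
  rw [integral_sub_mul_comp_mul_sub_div ha hb heven, integral_deriv_mul_comp_mul_sub_div ha hb]
    at hsplit
  rw [inv_mul_eq_div, eq_div_iff (by positivity)]
  linarith

end CauchySchlomilch

lemma two_mul_mul_mixture_integrand_sq (x lam : ℝ) {t : ℝ} (ht : 0 < t) :
    2 * t * (exp (-(x ^ 2) / (2 * t ^ 2)) / √(2 * π * t ^ 2) *
      (lam ^ 2 / 2 * exp (-(lam ^ 2) * t ^ 2 / 2))) =
    lam ^ 2 / √(2 * π) * exp (-lam * |x|) * exp (-2⁻¹ * (lam * t - |x| / t) ^ 2) := by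
  have hsqrt : √(2 * π * t ^ 2) = √(2 * π) * t := by
    rw [sqrt_mul (by positivity), sqrt_sq ht.le]
  have hexp : -(x ^ 2) / (2 * t ^ 2) + -(lam ^ 2) * t ^ 2 / 2 =
      -lam * |x| + -2⁻¹ * (lam * t - |x| / t) ^ 2 := by
    field_simp
    rw [← sq_abs x]
    ring
  rw [hsqrt, mul_assoc _ (exp _), ← exp_add, ← hexp, exp_add]
  field_simp

/-- The Laplace distribution is an exponential scale mixture of normals: for every `x : ℝ`
and `λ > 0`, `∫_0^∞ (2πs)^{-1/2} exp(-x²/(2s)) · (λ²/2) exp(-λ² s/2) ds = (λ/2) exp(-λ|x|)`. -/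
theorem statement9 (x lam : ℝ) (hlam : 0 < lam) :
    ∫ s in Set.Ioi (0 : ℝ),
        Real.exp (-(x ^ 2) / (2 * s)) / Real.sqrt (2 * Real.pi * s) *
          (lam ^ 2 / 2 * Real.exp (-(lam ^ 2) * s / 2)) =
      lam / 2 * Real.exp (-lam * |x|) := by
  calc _ = ∫ t in Ioi 0,
        lam ^ 2 / √(2 * π) * exp (-lam * |x|) * exp (-2⁻¹ * (lam * t - |x| / t) ^ 2) := by
        rw [← integral_comp_rpow_Ioi_of_pos two_pos]
        refine setIntegral_congr_fun measurableSet_Ioi fun t (ht : 0 < t) => ?_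
        simp only [show (2 : ℝ) - 1 = 1 by norm_num, rpow_one, rpow_two, smul_eq_mul]
        exact two_mul_mul_mixture_integrand_sq x lam ht
    _ = lam ^ 2 / √(2 * π) * exp (-lam * |x|) * ((2 * lam)⁻¹ * √(π / 2⁻¹)) := by
        rw [integral_const_mul, integral_comp_mul_sub_div_Ioi hlam (abs_nonneg x)
          (integrable_exp_neg_mul_sq (by norm_num)) (fun y => by simp), integral_gaussian]
    _ = lam / 2 * exp (-lam * |x|) := by
        rw [show π / 2⁻¹ = 2 * π by ring]
        field_simp
end

section
/- Let p_τ(θ) = ∫_0^∞ (2πλ²)^{−1/2} exp(−θ²/(2λ²)) · (2τ/(π(τ² + λ²))) dλ be the marginal density of the horseshoe prior with global parameter τ > 0. Then (i) p_τ has a pole at zero: p_τ(θ) → ∞ as θ → 0; and (ii) p_τ has Cauchy-like tails: there exist constants 0 < c ≤ C and T > 0 (depending on τ) such that c/θ² ≤ p_τ(θ) ≤ C/θ² for all |θ| ≥ T. -/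
open Filter

/-- The marginal density of the horseshoe prior with global parameter `τ`:
`p_τ(θ) = ∫_0^∞ (2πλ²)^{-1/2} exp(-θ²/(2λ²)) · 2τ/(π(τ² + λ²)) dλ`. -/
noncomputable def horseshoeDensity (τ θ : ℝ) : ℝ :=
  ∫ l in Set.Ioi (0 : ℝ),
    Real.exp (-(θ ^ 2) / (2 * l ^ 2)) / Real.sqrt (2 * Real.pi * l ^ 2) *
      (2 * τ / (Real.pi * (τ ^ 2 + l ^ 2)))

/-!
Pulling the constant `2τ / (π √(2π))` out of the integrand leaves the kernel
`k(λ) = exp(-θ²/(2λ²)) / (λ (τ² + λ²))`. Bounding `τ² + λ² ≥ λ²` gives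
`k(λ) ≤ exp(-θ²/(2λ²)) / λ³`, whose integral is exactly `1/θ²` (substitute `y = λ⁻²`), so
`p_τ(θ) ≤ 2τ / (π √(2π) θ²)`. For `λ > |θ|` the Gaussian factor is at least `e^{-1/2}`, and
`1 / (λ (τ² + λ²))` integrates over `(|θ|, ∞)` to `log(1 + τ²/θ²) / (2τ²)`, so
`p_τ(θ) ≥ e^{-1/2} log(1 + τ²/θ²) / (π √(2π) τ)`. The logarithm blows up as `θ → 0` and is
comparable to `τ²/θ²` once `|θ| ≥ τ`.
-/

open MeasureTheory Set Real Topology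

lemma rpow_neg_two_smul_exp_eq {c x : ℝ} (hx : 0 < x) :
    (|(-2 : ℝ)| * x ^ ((-2 : ℝ) - 1)) • exp (-c * x ^ (-2 : ℝ)) =
      2 * (exp (-c / x ^ 2) / x ^ 3) := by
  have h3 : x ^ ((-2 : ℝ) - 1) = (x ^ 3)⁻¹ := by
    rw [show (-2 : ℝ) - 1 = -(3 : ℕ) by norm_num, rpow_neg hx.le, rpow_natCast]
  have h2 : x ^ (-2 : ℝ) = (x ^ 2)⁻¹ := by
    rw [show (-2 : ℝ) = -(2 : ℕ) by norm_num, rpow_neg hx.le, rpow_natCast]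
  rw [h3, h2, smul_eq_mul, abs_neg, abs_two, div_eq_mul_inv, div_eq_mul_inv]
  ring

lemma integrableOn_exp_neg_div_sq_div_pow_three {c : ℝ} (hc : 0 < c) :
    IntegrableOn (fun x : ℝ => exp (-c / x ^ 2) / x ^ 3) (Ioi 0) := by
  have h := (integrableOn_Ioi_comp_rpow_iff (fun y => exp (-c * y)) (p := -2) (by norm_num)).2
    (by simpa using integrableOn_exp_mul_Ioi (neg_neg_of_pos hc) 0)
  have h' := (integrableOn_congr_fun (fun x hx => rpow_neg_two_smul_exp_eq (c := c) hx)
    measurableSet_Ioi).1 h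
  exact IntegrableOn.congr_fun (h'.const_mul 2⁻¹) (fun x _ => by simp) measurableSet_Ioi

lemma integral_exp_neg_div_sq_div_pow_three {c : ℝ} (hc : 0 < c) :
    ∫ x in Ioi (0 : ℝ), exp (-c / x ^ 2) / x ^ 3 = 1 / (2 * c) := by
  have h := integral_comp_rpow_Ioi (fun y => exp (-c * y)) (p := -2) (by norm_num)
  rw [setIntegral_congr_fun measurableSet_Ioi (fun x hx => rpow_neg_two_smul_exp_eq (c := c) hx),
    integral_const_mul, integral_exp_mul_Ioi (neg_neg_of_pos hc)] at h
  field_simp at h ⊢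
  simpa using h

lemma hasDerivAt_neg_log_one_add_sq_div_sq {τ l : ℝ} (hτ : τ ≠ 0) (hl : l ≠ 0) :
    HasDerivAt (fun x => -log (1 + τ ^ 2 / x ^ 2) / (2 * τ ^ 2))
      (1 / (l * (τ ^ 2 + l ^ 2))) l := by
  have hpos : 1 + τ ^ 2 / l ^ 2 ≠ 0 := by positivity
  have h := ((((hasDerivAt_pow 2 l).inv (pow_ne_zero 2 hl)).const_mul (τ ^ 2)).const_add 1).log
    hpos
  simp only [div_eq_mul_inv, Pi.inv_apply] at h ⊢
  refine (h.neg.mul_const (2 * τ ^ 2)⁻¹).congr_deriv ?_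
  field_simp
  ring

lemma tendsto_neg_log_one_add_sq_div_sq (τ : ℝ) :
    Tendsto (fun x : ℝ => -log (1 + τ ^ 2 / x ^ 2) / (2 * τ ^ 2)) atTop (𝓝 0) := by
  have h : Tendsto (fun x : ℝ => 1 + τ ^ 2 / x ^ 2) atTop (𝓝 1) := by
    simpa using
      (tendsto_const_nhds.div_atTop (tendsto_pow_atTop (α := ℝ) two_ne_zero)).const_add 1
  simpa using ((continuousAt_log one_ne_zero).tendsto.comp h).neg.div_const (2 * τ ^ 2)

lemma integrableOn_Ioi_one_div_mul_sq_add_sq_and_integral_eq {τ a : ℝ} (hτ : τ ≠ 0)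
    (ha : 0 < a) :
    IntegrableOn (fun l => 1 / (l * (τ ^ 2 + l ^ 2))) (Ioi a) ∧
      ∫ l in Ioi a, 1 / (l * (τ ^ 2 + l ^ 2)) = log (1 + τ ^ 2 / a ^ 2) / (2 * τ ^ 2) := by
  have hderiv : ∀ x ∈ Ici a, HasDerivAt (fun x => -log (1 + τ ^ 2 / x ^ 2) / (2 * τ ^ 2))
      (1 / (x * (τ ^ 2 + x ^ 2))) x :=
    fun x hx => hasDerivAt_neg_log_one_add_sq_div_sq hτ (ha.trans_le hx).ne'
  have hnonneg : ∀ x ∈ Ioi a, 0 ≤ 1 / (x * (τ ^ 2 + x ^ 2)) := fun x hx => by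
    have := ha.trans hx
    positivity
  refine ⟨integrableOn_Ioi_deriv_of_nonneg' hderiv hnonneg (tendsto_neg_log_one_add_sq_div_sq τ),
    ?_⟩
  rw [integral_Ioi_of_hasDerivAt_of_nonneg' hderiv hnonneg (tendsto_neg_log_one_add_sq_div_sq τ)]
  ring

lemma tendsto_log_one_add_sq_div_sq_nhdsNE {τ : ℝ} (hτ : τ ≠ 0) :
    Tendsto (fun θ : ℝ => log (1 + τ ^ 2 / θ ^ 2)) (𝓝[≠] 0) atTop := by
  have hsq : Tendsto (fun θ : ℝ => θ ^ 2) (𝓝[≠] 0) (𝓝[>] 0) :=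
    tendsto_nhdsWithin_iff.2
      ⟨((continuous_pow 2).tendsto' 0 0 (zero_pow two_ne_zero)).mono_left nhdsWithin_le_nhds,
        eventually_nhdsWithin_of_forall fun θ (hθ : θ ≠ 0) => mem_Ioi.2 (by positivity)⟩
  have hdiv : Tendsto (fun θ : ℝ => τ ^ 2 / θ ^ 2) (𝓝[≠] 0) atTop := by
    simpa only [div_eq_mul_inv, Function.comp_def] using
      (tendsto_inv_nhdsGT_zero.comp hsq).const_mul_atTop (by positivity : 0 < τ ^ 2)
  exact tendsto_log_atTop.comp (tendsto_atTop_add_const_left _ 1 hdiv)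

noncomputable def horseshoeKernel (τ θ l : ℝ) : ℝ :=
  exp (-θ ^ 2 / (2 * l ^ 2)) / (l * (τ ^ 2 + l ^ 2))

section HorseshoeKernel

variable {τ θ l : ℝ}

lemma horseshoeDensity_eq_mul_integral_horseshoeKernel (τ θ : ℝ) :
    horseshoeDensity τ θ = 2 * τ / (π * √(2 * π)) * ∫ l in Ioi 0, horseshoeKernel τ θ l := by
  rw [horseshoeDensity, ← integral_const_mul]
  refine setIntegral_congr_fun measurableSet_Ioi fun l (hl : 0 < l) => ?_
  rw [horseshoeKernel, sqrt_mul (by positivity), sqrt_sq hl.le]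
  field_simp

lemma horseshoeKernel_nonneg (hl : 0 < l) : 0 ≤ horseshoeKernel τ θ l := by
  unfold horseshoeKernel
  positivity

lemma horseshoeKernel_le (hl : 0 < l) :
    horseshoeKernel τ θ l ≤ exp (-(θ ^ 2 / 2) / l ^ 2) / l ^ 3 := by
  rw [horseshoeKernel, show -(θ ^ 2 / 2) / l ^ 2 = -θ ^ 2 / (2 * l ^ 2) by ring]
  gcongr
  nlinarith [sq_nonneg τ]

lemma exp_neg_half_mul_le_horseshoeKernel (h : |θ| < l) :
    exp (-1 / 2) * (1 / (l * (τ ^ 2 + l ^ 2))) ≤ horseshoeKernel τ θ l := by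
  have hl : 0 < l := (abs_nonneg θ).trans_lt h
  have hθl : θ ^ 2 ≤ l ^ 2 := (sq_lt_sq' (neg_lt_of_abs_lt h) (lt_of_abs_lt h)).le
  rw [horseshoeKernel, mul_one_div]
  refine div_le_div_of_nonneg_right (exp_le_exp.2 ?_) (by positivity)
  rw [le_div_iff₀ (by positivity)]
  linarith

lemma integrableOn_horseshoeKernel (τ : ℝ) (hθ : θ ≠ 0) :
    IntegrableOn (horseshoeKernel τ θ) (Ioi 0) := by
  have hmeas : Measurable (horseshoeKernel τ θ) := by
    unfold horseshoeKernel
    fun_prop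
  refine (integrableOn_exp_neg_div_sq_div_pow_three (by positivity : 0 < θ ^ 2 / 2)).mono'
    hmeas.aestronglyMeasurable ((ae_restrict_iff' measurableSet_Ioi).2
      (Eventually.of_forall fun l (hl : 0 < l) => ?_))
  rw [norm_of_nonneg (horseshoeKernel_nonneg hl)]
  exact horseshoeKernel_le hl

lemma integral_horseshoeKernel_le (τ : ℝ) (hθ : θ ≠ 0) :
    ∫ l in Ioi 0, horseshoeKernel τ θ l ≤ 1 / θ ^ 2 :=
  calc ∫ l in Ioi 0, horseshoeKernel τ θ l
      ≤ ∫ l in Ioi 0, exp (-(θ ^ 2 / 2) / l ^ 2) / l ^ 3 :=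
        setIntegral_mono_on (integrableOn_horseshoeKernel τ hθ)
          (integrableOn_exp_neg_div_sq_div_pow_three (by positivity)) measurableSet_Ioi
          fun _ hl => horseshoeKernel_le hl
    _ = 1 / θ ^ 2 := by
        rw [integral_exp_neg_div_sq_div_pow_three (by positivity)]
        ring

lemma le_integral_horseshoeKernel (hτ : τ ≠ 0) (hθ : θ ≠ 0) :
    exp (-1 / 2) * (log (1 + τ ^ 2 / θ ^ 2) / (2 * τ ^ 2)) ≤
      ∫ l in Ioi 0, horseshoeKernel τ θ l := by
  obtain ⟨hint, heq⟩ :=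
    integrableOn_Ioi_one_div_mul_sq_add_sq_and_integral_eq hτ (abs_pos.2 hθ)
  rw [sq_abs] at heq
  have hsub : Ioi |θ| ⊆ Ioi 0 := Ioi_subset_Ioi (abs_nonneg θ)
  calc exp (-1 / 2) * (log (1 + τ ^ 2 / θ ^ 2) / (2 * τ ^ 2))
      = ∫ l in Ioi |θ|, exp (-1 / 2) * (1 / (l * (τ ^ 2 + l ^ 2))) := by
        rw [integral_const_mul, heq]
    _ ≤ ∫ l in Ioi |θ|, horseshoeKernel τ θ l :=
        setIntegral_mono_on (hint.const_mul _)
          ((integrableOn_horseshoeKernel τ hθ).mono_set hsub) measurableSet_Ioi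
          fun _ hl => exp_neg_half_mul_le_horseshoeKernel hl
    _ ≤ ∫ l in Ioi 0, horseshoeKernel τ θ l :=
        setIntegral_mono_set (integrableOn_horseshoeKernel τ hθ)
          ((ae_restrict_iff' measurableSet_Ioi).2
            (Eventually.of_forall fun _ hl => horseshoeKernel_nonneg hl))
          hsub.eventuallyLE

end HorseshoeKernel

section HorseshoeDensity

variable {τ θ : ℝ}

lemma horseshoeDensity_le (hτ : 0 ≤ τ) (hθ : θ ≠ 0) :
    horseshoeDensity τ θ ≤ 2 * τ / (π * √(2 * π)) / θ ^ 2 := by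
  rw [horseshoeDensity_eq_mul_integral_horseshoeKernel, div_eq_mul_one_div _ (θ ^ 2)]
  exact mul_le_mul_of_nonneg_left (integral_horseshoeKernel_le τ hθ) (by positivity)

lemma le_horseshoeDensity (hτ : 0 < τ) (hθ : θ ≠ 0) :
    exp (-1 / 2) / (π * √(2 * π) * τ) * log (1 + τ ^ 2 / θ ^ 2) ≤ horseshoeDensity τ θ := by
  rw [horseshoeDensity_eq_mul_integral_horseshoeKernel]
  calc exp (-1 / 2) / (π * √(2 * π) * τ) * log (1 + τ ^ 2 / θ ^ 2)
      = 2 * τ / (π * √(2 * π)) * (exp (-1 / 2) * (log (1 + τ ^ 2 / θ ^ 2) / (2 * τ ^ 2))) := by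
        field_simp
    _ ≤ _ := mul_le_mul_of_nonneg_left (le_integral_horseshoeKernel hτ.ne' hθ) (by positivity)

lemma le_horseshoeDensity_of_le_abs (hτ : 0 < τ) (hθ : τ ≤ |θ|) :
    2 * exp (-1 / 2) * τ / (3 * π * √(2 * π)) / θ ^ 2 ≤ horseshoeDensity τ θ := by
  have hθ0 : θ ≠ 0 := abs_pos.1 (hτ.trans_le hθ)
  have hx : τ ^ 2 / θ ^ 2 ≤ 1 := by
    rw [div_le_one (by positivity)]
    exact sq_le_sq.2 (by rwa [abs_of_pos hτ])
  have hlog : 2 * (τ ^ 2 / θ ^ 2) / 3 ≤ log (1 + τ ^ 2 / θ ^ 2) :=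
    (div_le_div_of_nonneg_left (by positivity) (by positivity) (by linarith)).trans
      (le_log_one_add_of_nonneg (by positivity))
  calc 2 * exp (-1 / 2) * τ / (3 * π * √(2 * π)) / θ ^ 2
      = exp (-1 / 2) / (π * √(2 * π) * τ) * (2 * (τ ^ 2 / θ ^ 2) / 3) := by
        field_simp
    _ ≤ exp (-1 / 2) / (π * √(2 * π) * τ) * log (1 + τ ^ 2 / θ ^ 2) := by gcongr
    _ ≤ horseshoeDensity τ θ := le_horseshoeDensity hτ hθ0

end HorseshoeDensity

/-- The horseshoe marginal density has a pole at zero (`p_τ(θ) → ∞ as θ → 0`) and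
Cauchy-like tails: `c/θ² ≤ p_τ(θ) ≤ C/θ²` for all `|θ| ≥ T`. -/
theorem statement10 (τ : ℝ) (hτ : 0 < τ) :
    Tendsto (horseshoeDensity τ) (nhdsWithin 0 {θ : ℝ | θ ≠ 0}) atTop ∧
    ∃ c C T : ℝ, 0 < c ∧ c ≤ C ∧ 0 < T ∧
      ∀ θ : ℝ, T ≤ |θ| →
        c / θ ^ 2 ≤ horseshoeDensity τ θ ∧ horseshoeDensity τ θ ≤ C / θ ^ 2 := by
  refine ⟨?_, 2 * exp (-1 / 2) * τ / (3 * π * √(2 * π)), 2 * τ / (π * √(2 * π)), τ,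
    by positivity, ?_, hτ, fun θ hθ => ⟨le_horseshoeDensity_of_le_abs hτ hθ,
      horseshoeDensity_le hτ.le (abs_pos.1 (hτ.trans_le hθ))⟩⟩
  · have hK : 0 < exp (-1 / 2) / (π * √(2 * π) * τ) := by positivity
    refine tendsto_atTop_mono' _ ?_
      ((tendsto_log_one_add_sq_div_sq_nhdsNE hτ.ne').const_mul_atTop hK)
    filter_upwards [self_mem_nhdsWithin] with θ hθ using le_horseshoeDensity hτ hθ
  · have : exp (-1 / 2) ≤ 1 := exp_le_one_iff.2 (by norm_num)
    rw [div_le_div_iff₀ (by positivity) (by positivity)]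
    nlinarith [mul_pos (mul_pos hτ pi_pos) (sqrt_pos.2 (by positivity : (0 : ℝ) < 2 * π))]
end

section
/- In the Poisson graphical model on a finite undirected graph G = (V, E), integrability forces nonpositive interactions: if the unnormalized mass function on ℕ^V given by q(x) = exp{ Σ_{r ∈ V} (θ_r x_r − log(x_r!)) + Σ_{(r,t) ∈ E} θ_{rt} x_r x_t } is summable, i.e. Σ_{x ∈ ℕ^V} q(x) < ∞, then θ_{rt} ≤ 0 for every edge (r,t) ∈ E. -/
/-- In the Poisson graphical model on a finite undirected graph, summability of the
unnormalized mass function forces nonpositive interactions: if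
`x ↦ exp{Σ_r (θ_r x_r − log x_r!) + Σ_{(r,t)∈E} θ_{rt} x_r x_t}` is summable over `ℕ^V`,
then `θ_{rt} ≤ 0` for every edge `(r,t) ∈ E`. -/
theorem statement14 (N : ℕ) (E : Finset (Fin N × Fin N)) (hE : ∀ e ∈ E, e.1 < e.2)
    (θv : Fin N → ℝ) (θe : Fin N × Fin N → ℝ)
    (hsum : Summable fun x : Fin N → ℕ =>
      Real.exp (∑ r, (θv r * (x r : ℝ) - Real.log (Nat.factorial (x r))) +
        ∑ e ∈ E, θe e * (x e.1 : ℝ) * (x e.2 : ℝ))) :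
    ∀ e ∈ E, θe e ≤ 0 := by
  intro e he
  by_contra hpos
  push_neg at hpos
  set a := θe e with ha
  have hne : e.1 ≠ e.2 := ne_of_lt (hE e he)
  -- sequence
  set f : ℕ → (Fin N → ℕ) := fun n i => if i = e.1 ∨ i = e.2 then n else 0 with hf
  have hfr : ∀ n, f n e.1 = n := fun n => by simp [hf]
  have hft : ∀ n, f n e.2 = n := fun n => by simp [hf]
  have hfinj : Function.Injective f := by
    intro m n h
    have := congrFun h e.1
    rwa [hfr, hfr] at this
  -- vertex sum
  have hvsum : ∀ n : ℕ,
      (∑ r, (θv r * ((f n r : ℕ) : ℝ) - Real.log (Nat.factorial (f n r))))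
        = (θv e.1 + θv e.2) * n - 2 * Real.log (Nat.factorial n) := by
    intro n
    have hterm : ∀ i : Fin N,
        θv i * ((f n i : ℕ) : ℝ) - Real.log (Nat.factorial (f n i))
          = (if i = e.1 then θv e.1 * n - Real.log (Nat.factorial n) else 0)
            + (if i = e.2 then θv e.2 * n - Real.log (Nat.factorial n) else 0) := by
      intro i
      by_cases h1 : i = e.1 <;> by_cases h2 : i = e.2
      · exact absurd (h1 ▸ h2 ▸ rfl) hne
      · simp [hf, h1, h2, hne]
      · simp [hf, h1, h2, Ne.symm hne]
      · simp [hf, h1, h2]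
    simp only [hterm, Finset.sum_add_distrib, Finset.sum_ite_eq', Finset.mem_univ, if_true]
    ring
  -- edge sum
  have hesum : ∀ n : ℕ,
      (∑ e' ∈ E, θe e' * ((f n e'.1 : ℕ) : ℝ) * ((f n e'.2 : ℕ) : ℝ)) = a * n * n := by
    intro n
    rw [Finset.sum_eq_single e]
    · rw [hfr, hft]
    · intro e' he' hne'
      have hz : ((f n e'.1 : ℕ) : ℝ) = 0 ∨ ((f n e'.2 : ℕ) : ℝ) = 0 := by
        by_cases h1 : e'.1 = e.1 ∨ e'.1 = e.2
        · by_cases h2 : e'.2 = e.1 ∨ e'.2 = e.2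
          · exfalso
            have l1 := hE e' he'
            have l2 := hE e he
            rcases h1 with h1 | h1 <;> rcases h2 with h2 | h2
            · exact absurd (h1 ▸ h2 ▸ l1) (lt_irrefl _)
            · exact hne' (Prod.ext h1 h2)
            · exact absurd l2 (not_lt_of_gt (h1 ▸ h2 ▸ l1))
            · exact absurd (h1 ▸ h2 ▸ l1) (lt_irrefl _)
          · right; simp [hf, h2]
        · left; simp [hf, h1]
      rcases hz with hz | hz <;> rw [hz] <;> ring
    · intro h; exact absurd he h
  -- the summand along f
  have hterm : ∀ n : ℕ,
      (fun x : Fin N → ℕ =>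
        Real.exp (∑ r, (θv r * (x r : ℝ) - Real.log (Nat.factorial (x r))) +
          ∑ e ∈ E, θe e * (x e.1 : ℝ) * (x e.2 : ℝ))) (f n)
        = Real.exp ((θv e.1 + θv e.2) * n - 2 * Real.log (Nat.factorial n) + a * n * n) := by
    intro n
    simp only [hvsum n, hesum n]
  -- tendsto 0
  have htend : Filter.Tendsto
      (fun n => Real.exp ((θv e.1 + θv e.2) * n - 2 * Real.log (Nat.factorial n) + a * n * n))
      Filter.atTop (nhds 0) := by
    have h1 := hsum.tendsto_cofinite_zero.comp hfinj.tendsto_cofinite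
    rw [Nat.cofinite_eq_atTop] at h1
    exact h1.congr (fun n => hterm n)
  -- eventually the exponent is ≥ 0
  set c := θv e.1 + θv e.2 with hc
  have hlog : ∀ᶠ n : ℕ in Filter.atTop, Real.log n ≤ (a / 4) * n := by
    have h := (Real.isLittleO_log_id_atTop).def (by positivity : (0:ℝ) < a / 4)
    have h2 := tendsto_natCast_atTop_atTop (R := ℝ).eventually h
    filter_upwards [h2] with n hn
    have : |Real.log n| ≤ a / 4 * |(n:ℝ)| := by simpa [Real.norm_eq_abs] using hn
    calc Real.log n ≤ |Real.log n| := le_abs_self _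
      _ ≤ a / 4 * |(n:ℝ)| := this
      _ = a / 4 * n := by rw [abs_of_nonneg (Nat.cast_nonneg n)]
  have hbig : ∀ᶠ n : ℕ in Filter.atTop, (-2 * c / a : ℝ) ≤ n := by
    exact tendsto_natCast_atTop_atTop.eventually_ge_atTop _
  have hge : ∀ᶠ n : ℕ in Filter.atTop,
      (1:ℝ) ≤ Real.exp (c * n - 2 * Real.log (Nat.factorial n) + a * n * n) := by
    filter_upwards [hlog, hbig] with n hn hb
    rw [Real.one_le_exp_iff]
    have hfact : Real.log (Nat.factorial n) ≤ n * Real.log n := by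
      calc Real.log (Nat.factorial n) ≤ Real.log ((n:ℝ) ^ n) := by
            apply Real.log_le_log (by exact_mod_cast n.factorial_pos)
            exact_mod_cast Nat.factorial_le_pow n
        _ = n * Real.log n := Real.log_pow n n
    have hn0 : (0:ℝ) ≤ n := Nat.cast_nonneg n
    have hb' : -2 * c ≤ a * n := by
      have := mul_le_mul_of_nonneg_left hb (le_of_lt hpos)
      rwa [mul_div_cancel₀ _ (ne_of_gt hpos)] at this
    nlinarith [mul_le_mul_of_nonneg_left hn hn0,
      mul_le_mul_of_nonneg_right hb' hn0]
  have hlt : ∀ᶠ n : ℕ in Filter.atTop,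
      Real.exp (c * n - 2 * Real.log (Nat.factorial n) + a * n * n) < 1 :=
    htend.eventually_lt_const one_pos
  rcases (hge.and hlt).exists with ⟨n, h1, h2⟩
  exact absurd h2 (not_lt_of_ge h1)
end
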